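/- Let K ≥ 2, 1 > θ_1 > θ_2 > … > θ_K > 0, ε = 0, and c > θ_2(1−θ_1) (with c > 0), so that μ* := θ_1 is the optimal mean reward; set θ̄ := min(θ_1, c/(1−θ_1)) and note θ_k < θ̄ for all k ≥ 2. Consider minimizing Σ_{u∈U} η_u (μ* − μ(u)) over all η : U → [0,∞) subject to, for every k ∈ {2,…,K}, η_{(k)} + η_{(k,1)} ≥ 1/I(θ_k, θ̄). The minimum value equals C(θ) = Σ_{k=2}^K H_k(θ), where H_k(θ) = (c − (1−θ_1)θ_k)/I(θ_k, θ̄) if c < θ_1(1−θ_k) and H_k(θ) = (θ_1 − θ_k)/I(θ_k, θ̄) otherwise; i.e., H_k(θ) = min( θ_1 − θ_k , c − (1−θ_1)θ_k ) / I(θ_k, θ̄). -/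

import Mathlib

noncomputable section

/-- `p0 ε x = ε x + (1−ε)(1−x)`: probability that the ε-noisy measurement of a
Bernoulli(x) arm returns 0. -/
def p0 (ε x : ℝ) : ℝ := ε * x + (1 - ε) * (1 - x)

/-- A static policy: either play arm `k` directly, or measure arm `k` and play
arm `l` if the measurement is 1 and arm `m` if it is 0. -/
inductive Policy where
  | play (k : ℕ)
  | meas (k l m : ℕ)
deriving DecidableEq

/-- Mean reward `μ(u)` of a static policy `u`, with arm means `θ`, noise level `ε`,
and measurement cost `c`. -/
def reward (θ : ℕ → ℝ) (ε c : ℝ) : Policy → ℝ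
  | .play k => θ k
  | .meas k l m =>
      -c + (if l = k then (1 - ε) * θ k else (1 - p0 ε (θ k)) * θ l)
         + (if m = k then ε * θ k else p0 ε (θ k) * θ m)

/-- The finite set `U` of all static policies on arms `{1,…,K}`. -/
def allPolicies (K : ℕ) : Finset Policy :=
  ((Finset.Icc 1 K).image Policy.play) ∪
  (((Finset.Icc 1 K) ×ˢ (Finset.Icc 1 K) ×ˢ (Finset.Icc 1 K)).image
    fun p => Policy.meas p.1 p.2.1 p.2.2)

/-- `I(p,q)`: KL divergence between Bernoulli(p) and Bernoulli(q). -/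
def klBer (p q : ℝ) : ℝ :=
  p * Real.log (p / q) + (1 - p) * Real.log ((1 - p) / (1 - q))

/-!
With perfect measurements and `c ≥ θ₂(1 − θ₁)`, no static policy has negative regret
`θ₁ − μ(u)`, so the problem is a covering linear program with nonnegative costs in which the
constraint of arm `k` involves only the two variables `η_(k)` and `η_(k,1)`, distinct for distinct
`k`. Such a program is solved by putting the whole required mass `1 / I(θ_k, θ̄)` on the cheaper of
the two policies, whose regrets are `θ₁ − θ_k` and `c − (1 − θ₁)θ_k`.
-/

open Finset InformationTheory

lemma klBer_eq_klFun {p q : ℝ} (hq0 : q ≠ 0) (hq1 : q ≠ 1) :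
    klBer p q = q * klFun (p / q) + (1 - q) * klFun ((1 - p) / (1 - q)) := by
  have : 1 - q ≠ 0 := sub_ne_zero.mpr hq1.symm
  simp only [klBer, klFun_apply]
  field_simp
  ring

lemma klBer_pos {p q : ℝ} (hp0 : 0 ≤ p) (hp1 : p ≤ 1) (hq0 : 0 < q) (hq1 : q < 1)
    (hpq : p ≠ q) : 0 < klBer p q := by
  rw [klBer_eq_klFun hq0.ne' hq1.ne]
  have hfirst : 0 < klFun (p / q) := by
    refine (klFun_nonneg (by positivity)).lt_of_ne' fun h => hpq ?_
    rwa [klFun_eq_zero_iff (by positivity), div_eq_one_iff_eq hq0.ne'] at h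
  have hsecond : 0 ≤ klFun ((1 - p) / (1 - q)) :=
    klFun_nonneg (div_nonneg (by linarith) (by linarith))
  have : 0 < 1 - q := by linarith
  positivity

section Cover

variable {α ι : Type*} [DecidableEq α] {U : Finset α} {s : Finset ι} {a b : ι → α}
  {g : α → ℝ} {r : ι → ℝ}

theorem sum_mul_min_le_of_cover (ha : ∀ i ∈ s, a i ∈ U) (hb : ∀ i ∈ s, b i ∈ U)
    (hg : ∀ u ∈ U, 0 ≤ g u) (hainj : Set.InjOn a s) (hbinj : Set.InjOn b s)
    (hab : ∀ i ∈ s, ∀ j ∈ s, a i ≠ b j) {η : α → ℝ} (hη : ∀ u, 0 ≤ η u)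
    (hcover : ∀ i ∈ s, r i ≤ η (a i) + η (b i)) :
    ∑ i ∈ s, r i * min (g (a i)) (g (b i)) ≤ ∑ u ∈ U, η u * g u := by
  have hterm : ∀ i ∈ s, r i * min (g (a i)) (g (b i)) ≤
      η (a i) * g (a i) + η (b i) * g (b i) := fun i hi =>
    calc r i * min (g (a i)) (g (b i))
        ≤ (η (a i) + η (b i)) * min (g (a i)) (g (b i)) :=
          mul_le_mul_of_nonneg_right (hcover i hi) (le_min (hg _ (ha i hi)) (hg _ (hb i hi)))
      _ ≤ η (a i) * g (a i) + η (b i) * g (b i) := by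
          rw [add_mul]
          exact add_le_add (mul_le_mul_of_nonneg_left (min_le_left _ _) (hη _))
            (mul_le_mul_of_nonneg_left (min_le_right _ _) (hη _))
  have hdisj : Disjoint (s.image a) (s.image b) := by
    simp only [disjoint_left, mem_image]
    rintro _ ⟨i, hi, rfl⟩ ⟨j, hj, hji⟩
    exact hab i hi j hj hji.symm
  have hsub : s.image a ∪ s.image b ⊆ U := by
    simp only [union_subset_iff, image_subset_iff]
    exact ⟨ha, hb⟩
  calc ∑ i ∈ s, r i * min (g (a i)) (g (b i))
      ≤ ∑ i ∈ s, (η (a i) * g (a i) + η (b i) * g (b i)) := sum_le_sum hterm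
    _ = ∑ u ∈ s.image a ∪ s.image b, η u * g u := by
        rw [sum_union hdisj, sum_image hainj, sum_image hbinj, sum_add_distrib]
    _ ≤ ∑ u ∈ U, η u * g u :=
        sum_le_sum_of_subset_of_nonneg hsub fun u hu _ => mul_nonneg (hη u) (hg u hu)

theorem exists_cover_sum_eq (ha : ∀ i ∈ s, a i ∈ U) (hb : ∀ i ∈ s, b i ∈ U)
    (hr : ∀ i ∈ s, 0 ≤ r i) :
    ∃ η : α → ℝ, (∀ u, 0 ≤ η u) ∧ (∀ i ∈ s, r i ≤ η (a i) + η (b i)) ∧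
      ∑ i ∈ s, r i * min (g (a i)) (g (b i)) = ∑ u ∈ U, η u * g u := by
  classical
  set pick : ι → α := fun i => if g (a i) ≤ g (b i) then a i else b i
  have hpick : ∀ i ∈ s, pick i ∈ U := fun i hi => by
    simp only [pick]
    split_ifs
    exacts [ha i hi, hb i hi]
  have hterm : ∀ u, ∀ j ∈ s, 0 ≤ if pick j = u then r j else 0 := fun u j hj => by
    split_ifs
    exacts [hr j hj, le_rfl]
  set η : α → ℝ := fun u => ∑ j ∈ s, if pick j = u then r j else 0
  have hη : ∀ u, 0 ≤ η u := fun u => sum_nonneg (hterm u)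
  refine ⟨η, hη, fun i hi => ?_, ?_⟩
  · have hself : ∀ u, pick i = u → r i ≤ η u := fun u hu =>
      (if_pos hu).symm.trans_le (single_le_sum (hterm u) hi)
    by_cases h : g (a i) ≤ g (b i)
    · linarith [hself (a i) (if_pos h), hη (b i)]
    · linarith [hself (b i) (if_neg h), hη (a i)]
  · simp only [η, sum_mul, ite_mul, zero_mul]
    rw [sum_comm]
    refine sum_congr rfl fun i hi => ?_
    rw [sum_ite_eq, if_pos (hpick i hi), min_def]
    simp only [pick]
    split_ifs <;> rfl

theorem isLeast_sum_mul_min_of_cover (ha : ∀ i ∈ s, a i ∈ U) (hb : ∀ i ∈ s, b i ∈ U)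
    (hg : ∀ u ∈ U, 0 ≤ g u) (hr : ∀ i ∈ s, 0 ≤ r i) (hainj : Set.InjOn a s)
    (hbinj : Set.InjOn b s) (hab : ∀ i ∈ s, ∀ j ∈ s, a i ≠ b j) :
    IsLeast {x : ℝ | ∃ η : α → ℝ, (∀ u, 0 ≤ η u) ∧ (∀ i ∈ s, r i ≤ η (a i) + η (b i)) ∧
        x = ∑ u ∈ U, η u * g u}
      (∑ i ∈ s, r i * min (g (a i)) (g (b i))) := by
  refine ⟨?_, ?_⟩
  · obtain ⟨η, hη, hcover, hsum⟩ := exists_cover_sum_eq (g := g) ha hb hr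
    exact ⟨η, hη, hcover, hsum⟩
  · rintro x ⟨η, hη, hcover, rfl⟩
    exact sum_mul_min_le_of_cover ha hb hg hainj hbinj hab hη hcover

end Cover

lemma play_mem_allPolicies {K k : ℕ} (hk : k ∈ Icc 1 K) : Policy.play k ∈ allPolicies K :=
  mem_union_left _ (mem_image_of_mem _ hk)

lemma meas_mem_allPolicies {K k l m : ℕ} (hk : k ∈ Icc 1 K) (hl : l ∈ Icc 1 K)
    (hm : m ∈ Icc 1 K) : Policy.meas k l m ∈ allPolicies K :=
  mem_union_right _ <|
    mem_image.mpr ⟨(k, l, m), mem_product.mpr ⟨hk, mem_product.mpr ⟨hl, hm⟩⟩, rfl⟩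

lemma reward_zero_meas (θ : ℕ → ℝ) (c : ℝ) (k l m : ℕ) :
    reward θ 0 c (.meas k l m) =
      -c + θ k * (if l = k then 1 else θ l) + (1 - θ k) * (if m = k then 0 else θ m) := by
  simp only [reward, p0]
  split_ifs <;> ring

lemma reward_zero_meas_self_one (θ : ℕ → ℝ) (c : ℝ) {k : ℕ} (hk : k ≠ 1) :
    reward θ 0 c (.meas k k 1) = -c + θ k + (1 - θ k) * θ 1 := by
  rw [reward_zero_meas, if_pos rfl, if_neg hk.symm]
  ring

-- Only the policies `(k, k, m)` can come close to `θ 1`: their regret is at least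
-- `c - θ 2 * (1 - θ 1)` (attained at `(1, 1, 2)`); any other policy mixes arm means at cost `c`.
lemma reward_le_of_mem_allPolicies {K : ℕ} {θ : ℕ → ℝ} {c : ℝ}
    (hθ : AntitoneOn θ (Set.Icc 1 K)) (hK0 : 0 ≤ θ K) (h1 : θ 1 ≤ 1) (hc : 0 ≤ c)
    (hc2 : θ 2 * (1 - θ 1) ≤ c) {u : Policy} (hu : u ∈ allPolicies K) :
    reward θ 0 c u ≤ θ 1 := by
  have hle1 : ∀ j ∈ Icc 1 K, θ j ≤ θ 1 := fun j hj => by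
    rw [mem_Icc] at hj
    exact hθ ⟨le_rfl, hj.1.trans hj.2⟩ ⟨hj.1, hj.2⟩ hj.1
  have hle2 : ∀ j ∈ Icc 1 K, j ≠ 1 → θ j ≤ θ 2 := fun j hj hj1 => by
    rw [mem_Icc] at hj
    exact hθ ⟨by omega, by omega⟩ ⟨hj.1, hj.2⟩ (by omega)
  have hnn : ∀ j ∈ Icc 1 K, 0 ≤ θ j := fun j hj => by
    rw [mem_Icc] at hj
    exact hK0.trans (hθ ⟨hj.1, hj.2⟩ ⟨hj.1.trans hj.2, le_rfl⟩ hj.2)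
  simp only [allPolicies, mem_union, mem_image, mem_product] at hu
  rcases hu with ⟨k, hk, rfl⟩ | ⟨⟨k, l, m⟩, ⟨hk, hl, hm⟩, rfl⟩
  · exact hle1 k hk
  dsimp only at hk hl hm ⊢
  rw [reward_zero_meas]
  have hB1 : (if m = k then 0 else θ m) ≤ θ 1 := by
    split_ifs
    exacts [(hnn k hk).trans (hle1 k hk), hle1 m hm]
  have hB2 : k = 1 → (1 - θ 1) * (if m = k then 0 else θ m) ≤ c := fun hk1 => by
    split_ifs with hmk
    · linarith
    · nlinarith [hle2 m hm (hk1 ▸ hmk)]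
  generalize (if m = k then 0 else θ m) = B at hB1 hB2 ⊢
  have hk0 := hnn k hk
  obtain rfl | hlk := eq_or_ne l k
  · rw [if_pos rfl]
    obtain rfl | hk1 := eq_or_ne l 1
    · nlinarith [hB2 rfl]
    · have hl1 := hle1 l hk
      nlinarith [mul_le_mul_of_nonneg_right (hle2 l hk hk1) (sub_nonneg.mpr h1)]
  · rw [if_neg hlk]
    nlinarith [hle1 l hl, hle1 k hk]

lemma min_eq_ite_cost_lt (t₁ t c : ℝ) :
    min (t₁ - t) (c - (1 - t₁) * t) =
      if c < t₁ * (1 - t) then c - (1 - t₁) * t else t₁ - t := by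
  split_ifs with h
  · exact min_eq_right (by linarith)
  · exact min_eq_left (by linarith)

theorem isLeast_regret_play_or_meas {K : ℕ} {θ : ℕ → ℝ} {c : ℝ} {r : ℕ → ℝ}
    (hθ : AntitoneOn θ (Set.Icc 1 K)) (hK0 : 0 ≤ θ K) (h1 : θ 1 ≤ 1) (hc : 0 ≤ c)
    (hc2 : θ 2 * (1 - θ 1) ≤ c) (hr : ∀ k, 2 ≤ k → k ≤ K → 0 ≤ r k) :
    IsLeast
      {x : ℝ | ∃ η : Policy → ℝ, (∀ u, 0 ≤ η u) ∧
        (∀ k, 2 ≤ k → k ≤ K → r k ≤ η (.play k) + η (.meas k k 1)) ∧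
        x = ∑ u ∈ allPolicies K, η u * (θ 1 - reward θ 0 c u)}
      (∑ k ∈ Icc 2 K, r k * min (θ 1 - θ k) (c - (1 - θ 1) * θ k)) := by
  have hIcc : ∀ k ∈ Icc 2 K, k ∈ Icc 1 K := fun _ hk => Icc_subset_Icc_left one_le_two hk
  have hcover := isLeast_sum_mul_min_of_cover (U := allPolicies K) (s := Icc 2 K)
    (a := Policy.play) (b := fun k => .meas k k 1) (g := fun u => θ 1 - reward θ 0 c u) (r := r)
    (fun k hk => play_mem_allPolicies (hIcc k hk))
    (fun k hk => meas_mem_allPolicies (hIcc k hk) (hIcc k hk)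
      (left_mem_Icc.mpr (by rw [mem_Icc] at hk; omega)))
    (fun u hu => sub_nonneg.mpr (reward_le_of_mem_allPolicies hθ hK0 h1 hc hc2 hu))
    (fun k hk => hr k (mem_Icc.mp hk).1 (mem_Icc.mp hk).2)
    (fun _ _ _ _ h => Policy.play.inj h) (fun _ _ _ _ h => (Policy.meas.inj h).1)
    (fun _ _ _ _ h => Policy.noConfusion h)
  simp only [mem_Icc, and_imp] at hcover
  convert hcover using 2 with k hk
  rw [mem_Icc] at hk
  rw [reward_zero_meas_self_one θ c (by omega : k ≠ 1)]
  congr 2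
  ring

/-- Case 2 (`u*(θ) = (1)`, perfect measurements) of the regret
lower-bound optimization problem: with `θ̄ = min(θ_1, c/(1−θ_1))` (and `θ_k < θ̄` for all
`k ≥ 2`), minimizing `Σ_u η_u (μ* − μ(u))` over nonnegative `η` subject to
`η_{(k)} + η_{(k,1)} ≥ 1/I(θ_k,θ̄)` for `2 ≤ k ≤ K` has minimum value
`C(θ) = Σ_{k=2}^K H_k(θ)` where `H_k(θ) = (c − (1−θ_1)θ_k)/I(θ_k,θ̄)` if
`c < θ_1(1−θ_k)` and `(θ_1−θ_k)/I(θ_k,θ̄)` otherwise; i.e.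
`H_k(θ) = min(θ_1−θ_k, c−(1−θ_1)θ_k)/I(θ_k,θ̄)`. -/
theorem stmt7 (K : ℕ) (hK : 2 ≤ K) (θ : ℕ → ℝ)
    (h1 : θ 1 < 1) (hKpos : 0 < θ K)
    (hmono : ∀ i, 1 ≤ i → i < K → θ (i + 1) < θ i)
    (c : ℝ) (hc : 0 < c) (hcopt : c > θ 2 * (1 - θ 1)) :
    let θbar : ℝ := min (θ 1) (c / (1 - θ 1))
    let H : ℕ → ℝ := fun k =>
      (if c < θ 1 * (1 - θ k) then c - (1 - θ 1) * θ k else θ 1 - θ k) /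
        klBer (θ k) θbar
    (∀ k, 2 ≤ k → k ≤ K → θ k < θbar) ∧
    IsLeast
      {x : ℝ | ∃ η : Policy → ℝ, (∀ u, 0 ≤ η u) ∧
        (∀ k, 2 ≤ k → k ≤ K →
          1 / klBer (θ k) θbar ≤ η (.play k) + η (.meas k k 1)) ∧
        x = ∑ u ∈ allPolicies K, η u * (θ 1 - reward θ 0 c u)}
      (∑ k ∈ Finset.Icc 2 K, H k) ∧
    (∀ k, 2 ≤ k → k ≤ K →
      H k = min (θ 1 - θ k) (c - (1 - θ 1) * θ k) / klBer (θ k) θbar) := by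
  intro θbar H
  have hanti : StrictAntiOn θ (Set.Icc 1 K) :=
    strictAntiOn_of_succ_lt Set.ordConnected_Icc fun i _ hi hsi =>
      hmono i hi.1 (Nat.succ_le_iff.mp hsi.2)
  have hle2 : ∀ k, 2 ≤ k → k ≤ K → θ k ≤ θ 2 := fun k h2 hk =>
    hanti.antitoneOn ⟨by omega, hK⟩ ⟨by omega, hk⟩ h2
  have hpos : ∀ k, 1 ≤ k → k ≤ K → 0 < θ k := fun k hk1 hk =>
    hKpos.trans_le (hanti.antitoneOn ⟨hk1, hk⟩ ⟨hk1.trans hk, le_rfl⟩ hk)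
  have h21 : θ 2 < θ 1 := hanti ⟨le_rfl, by omega⟩ ⟨by omega, hK⟩ one_lt_two
  have h2bar : θ 2 < c / (1 - θ 1) := (lt_div_iff₀ (sub_pos.mpr h1)).mpr hcopt
  have hθbar : ∀ k, 2 ≤ k → k ≤ K → θ k < θbar := fun k h2 hk =>
    lt_min ((hle2 k h2 hk).trans_lt h21) ((hle2 k h2 hk).trans_lt h2bar)
  have hbar1 : θbar < 1 := (min_le_left _ _).trans_lt h1
  have hI : ∀ k, 2 ≤ k → k ≤ K → 0 < klBer (θ k) θbar := fun k h2 hk => by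
    have hk0 := hpos k (by omega) hk
    have hkbar := hθbar k h2 hk
    exact klBer_pos hk0.le (by linarith) (hk0.trans hkbar) hbar1 hkbar.ne
  have hH : ∀ k, 2 ≤ k → k ≤ K →
      H k = min (θ 1 - θ k) (c - (1 - θ 1) * θ k) / klBer (θ k) θbar := fun k _ _ => by
    rw [min_eq_ite_cost_lt]
  refine ⟨hθbar, ?_, hH⟩
  have hLP := isLeast_regret_play_or_meas (r := fun k => 1 / klBer (θ k) θbar)
    hanti.antitoneOn hKpos.le h1.le hc.le hcopt.le
    fun k h2 hk => (one_div_pos.mpr (hI k h2 hk)).le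
  convert hLP using 2 with k hk
  rw [mem_Icc] at hk
  rw [hH k hk.1 hk.2, one_div_mul_eq_div]
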